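/- arXiv:2212.03931 — 3 statements merged into one kernel-verified Lean document; each statement's English description precedes it below -/
import Mathlib

section
/- Let X be a finite set with default d ∈ X, let D be a collection of subsets of X each containing d with X ∈ D, and let p_d : D → [0,1] be a default-choice data set whose restriction to D \ {X} is consistent with the random utility model. Then p_d^RUM(X) equals the maximum, over all probability distributions ν on the set of rationalizable deterministic choice functions on D satisfying, for every A ∈ D \ {X}, that the ν-probability of {c : c(A) = d} equals p_d(A), of the ν-probability of {c : c(X) = d}; in particular this maximum is attained. -/
open scoped Classical

/-- `x` is the unique maximizer of `u` on the finite set `A`. -/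
def IsUniqueMax {α : Type*} (u : α → ℝ) (A : Finset α) (x : α) : Prop :=
  x ∈ A ∧ ∀ y ∈ A, y ≠ x → u y < u x

/-- The default-choice data set `p` on the collection `D` of choice sets is consistent
with the random utility model. -/
def ConsistentRUMDefault {α : Type*} (d : α) (D : Finset (Finset α))
    (p : Finset α → ℝ) : Prop :=
  ∃ (n : ℕ) (u : Fin n → α → ℝ) (ρ : Fin n → ℝ),
    (∀ i, Function.Injective (u i)) ∧
    (∀ i, 0 ≤ ρ i) ∧ (∑ i, ρ i = 1) ∧
    ∀ A ∈ D, p A = ∑ i ∈ Finset.univ.filter (fun i => IsUniqueMax (u i) A d), ρ i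

/-- A deterministic choice function on `D` is rationalizable if there is a strict linear
order on `α` such that on each `A ∈ D` it picks the greatest element of `A`. -/
def Rationalizable {α : Type*} (D : Finset (Finset α)) (c : Finset α → α) : Prop :=
  (∀ A ∈ D, c A ∈ A) ∧
    ∃ r : α → α → Prop, IsStrictTotalOrder α r ∧
      ∀ A ∈ D, ∀ y ∈ A, y ≠ c A → r (c A) y

/-- The RUM bound `p_d^RUM(X)`: the supremum of all `x ∈ [0,1]` such that the data set
that agrees with `p` away from the grand set `X = Finset.univ` and takes value `x` at `X`
is consistent with RUM. -/
noncomputable def pdRUM {α : Type*} [Fintype α] [DecidableEq α]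
    (d : α) (D : Finset (Finset α)) (p : Finset α → ℝ) : ℝ :=
  sSup {x : ℝ | x ∈ Set.Icc (0 : ℝ) 1 ∧
    ConsistentRUMDefault d D (Function.update p Finset.univ x)}

/-!
A random utility model is the same thing as a probability distribution on rationalizable
deterministic choice functions: an injective utility induces the choice function picking its
maximizer, and conversely the order rationalizing a choice function is represented by the
utility counting, for each alternative, the alternatives ranked below it. Hence the values of
`p_d(X)` compatible with RUM are exactly the probabilities of choosing `d` from `X` under the
mixtures reproducing `p_d` on `D \ {X}`. These form the image of a compact polytope under a
linear map, and it is nonempty by hypothesis, so its supremum is a maximum.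
-/

open Finset

section

variable {α : Type*}

theorem IsUniqueMax.unique {u : α → ℝ} {A : Finset α} {x y : α}
    (hx : IsUniqueMax u A x) (hy : IsUniqueMax u A y) : x = y := by
  by_contra hne
  exact (hx.2 y hy.1 (Ne.symm hne)).asymm (hy.2 x hx.1 hne)

theorem IsUniqueMax.isUniqueMax_iff {u : α → ℝ} {A : Finset α} {x y : α}
    (hx : IsUniqueMax u A x) : IsUniqueMax u A y ↔ x = y :=
  ⟨hx.unique, fun h => h ▸ hx⟩

theorem exists_utility_of_isStrictTotalOrder [Fintype α] (r : α → α → Prop)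
    [IsStrictTotalOrder α r] :
    ∃ u : α → ℝ, Function.Injective u ∧ ∀ a b, r a b → u b < u a := by
  let u : α → ℝ := fun a => #{b | r a b}
  have hu : ∀ a b, r a b → u b < u a := by
    intro a b hab
    have hlt : ({c | r b c} : Finset α) ⊂ ({c | r a c} : Finset α) := by
      refine (ssubset_iff_of_subset fun c hc => ?_).2 ⟨b, ?_, ?_⟩
      · simp only [mem_filter, mem_univ, true_and] at hc ⊢
        exact _root_.trans hab hc
      · simpa using hab
      · simpa using irrefl b
    exact Nat.cast_lt.mpr (card_lt_card hlt)
  refine ⟨u, fun a b hab => ?_, hu⟩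
  rcases trichotomous_of r a b with h | h | h
  · exact absurd hab (hu a b h).ne'
  · exact h
  · exact absurd hab (hu b a h).ne

theorem Rationalizable.exists_utility [Fintype α] {D : Finset (Finset α)} {c : Finset α → α}
    (hc : Rationalizable D c) :
    ∃ u : α → ℝ, Function.Injective u ∧ ∀ A ∈ D, IsUniqueMax u A (c A) := by
  obtain ⟨hmem, r, hr, hgr⟩ := hc
  obtain ⟨u, hu, hrep⟩ := exists_utility_of_isStrictTotalOrder r
  exact ⟨u, hu, fun A hA => ⟨hmem A hA, fun y hy hne => hrep _ _ (hgr A hA y hy hne)⟩⟩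

/-- `d` is only a junk value, for the empty set. -/
noncomputable def argmaxChoice (u : α → ℝ) (d : α) (A : Finset α) : α :=
  if h : A.Nonempty then (A.exists_max_image u h).choose else d

theorem isUniqueMax_argmaxChoice {u : α → ℝ} (hu : Function.Injective u) (d : α)
    {A : Finset α} (h : A.Nonempty) : IsUniqueMax u A (argmaxChoice u d A) := by
  rw [argmaxChoice, dif_pos h]
  obtain ⟨hmem, hle⟩ := (A.exists_max_image u h).choose_spec
  exact ⟨hmem, fun y hy hne => (hle y hy).lt_of_ne fun he => hne (hu he)⟩

theorem rationalizable_argmaxChoice {u : α → ℝ} (hu : Function.Injective u) {d : α}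
    {D : Finset (Finset α)} (hd : ∀ A ∈ D, d ∈ A) :
    Rationalizable D (argmaxChoice u d) := by
  refine ⟨fun A hA => (isUniqueMax_argmaxChoice hu d ⟨d, hd A hA⟩).1,
    fun a b => u b < u a, ?_, fun A hA => (isUniqueMax_argmaxChoice hu d ⟨d, hd A hA⟩).2⟩
  exact
    { trichotomous := fun a b h₁ h₂ => hu (le_antisymm (not_lt.1 h₁) (not_lt.1 h₂))
      irrefl := fun a => lt_irrefl (u a)
      trans := fun a b c h₁ h₂ => h₂.trans h₁ }

section Mixtures

variable {d : α} {D : Finset (Finset α)}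

theorem ConsistentRUMDefault.mem_Icc {q : Finset α → ℝ} (h : ConsistentRUMDefault d D q)
    {A : Finset α} (hA : A ∈ D) : q A ∈ Set.Icc (0 : ℝ) 1 := by
  obtain ⟨n, u, ρ, -, hρ0, hρ1, hq⟩ := h
  rw [hq A hA]
  exact ⟨sum_nonneg fun i _ => hρ0 i,
    hρ1 ▸ sum_le_sum_of_subset_of_nonneg (filter_subset _ _) fun i _ _ => hρ0 i⟩

theorem ConsistentRUMDefault.exists_update [DecidableEq α] {p : Finset α → ℝ} {X : Finset α}
    (h : ConsistentRUMDefault d (D.erase X) p) :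
    ∃ x, ConsistentRUMDefault d D (Function.update p X x) := by
  obtain ⟨n, u, ρ, hinj, hρ0, hρ1, hp⟩ := h
  refine ⟨∑ i with IsUniqueMax (u i) X d, ρ i, n, u, ρ, hinj, hρ0, hρ1, fun A hA => ?_⟩
  rcases eq_or_ne A X with rfl | hAX
  · rw [Function.update_self]
  · rw [Function.update_of_ne hAX, hp A (mem_erase.2 ⟨hAX, hA⟩)]

variable [Fintype α] [DecidableEq α]

theorem consistentRUMDefault_iff_exists_mixture (hd : ∀ A ∈ D, d ∈ A) (q : Finset α → ℝ) :
    ConsistentRUMDefault d D q ↔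
      ∃ ν ∈ stdSimplex ℝ {c : Finset α → α // Rationalizable D c},
        ∀ A ∈ D, q A = ∑ c with c.val A = d, ν c := by
  constructor
  · rintro ⟨n, u, ρ, hinj, hρ0, hρ1, hq⟩
    let C : Fin n → {c : Finset α → α // Rationalizable D c} := fun i =>
      ⟨argmaxChoice (u i) d, rationalizable_argmaxChoice (hinj i) hd⟩
    refine ⟨fun c => ∑ i with C i = c, ρ i,
      ⟨fun c => sum_nonneg fun i _ => hρ0 i, (sum_fiberwise univ C ρ).trans hρ1⟩,
      fun A hA => ?_⟩
    rw [sum_fiberwise_eq_sum_filter, hq A hA]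
    refine sum_congr (filter_congr fun i _ => ?_) fun _ _ => rfl
    simpa [eq_comm] using (isUniqueMax_argmaxChoice (hinj i) d ⟨d, hd A hA⟩).isUniqueMax_iff
  · rintro ⟨ν, ⟨hν0, hν1⟩, hq⟩
    choose U hUinj hUmax using
      fun c : {c : Finset α → α // Rationalizable D c} => c.prop.exists_utility
    let e := (Fintype.equivFin {c : Finset α → α // Rationalizable D c}).symm
    refine ⟨_, fun i => U (e i), fun i => ν (e i), fun i => hUinj _, fun i => hν0 _,
      (e.sum_comp ν).trans hν1, fun A hA => ?_⟩
    rw [hq A hA]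
    refine (sum_equiv e (fun i => ?_) fun _ _ => rfl).symm
    simpa using (hUmax (e i) A hA).isUniqueMax_iff

def mixtureDefaultProbs (d : α) (D : Finset (Finset α)) (p : Finset α → ℝ) (X : Finset α) :
    Set ℝ :=
  {y : ℝ | ∃ ν : {c : Finset α → α // Rationalizable D c} → ℝ,
    (∀ c, 0 ≤ ν c) ∧ (∑ c, ν c = 1) ∧
    (∀ A ∈ D.erase X, ∑ c with c.val A = d, ν c = p A) ∧ y = ∑ c with c.val X = d, ν c}

theorem mem_mixtureDefaultProbs_iff (hd : ∀ A ∈ D, d ∈ A) {X : Finset α} (hX : X ∈ D)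
    (p : Finset α → ℝ) (x : ℝ) :
    x ∈ mixtureDefaultProbs d D p X ↔ ConsistentRUMDefault d D (Function.update p X x) := by
  rw [consistentRUMDefault_iff_exists_mixture hd]
  constructor
  · rintro ⟨ν, hν0, hν1, hν, rfl⟩
    refine ⟨ν, ⟨hν0, hν1⟩, fun A hA => ?_⟩
    rcases eq_or_ne A X with rfl | hAX
    · rw [Function.update_self]
    · rw [Function.update_of_ne hAX, hν A (mem_erase.2 ⟨hAX, hA⟩)]
  · rintro ⟨ν, ⟨hν0, hν1⟩, hν⟩
    refine ⟨ν, hν0, hν1, fun A hA => ?_, by simpa using hν X hX⟩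
    rw [← hν A (mem_of_mem_erase hA), Function.update_of_ne (ne_of_mem_erase hA)]

theorem isCompact_mixtureDefaultProbs (p : Finset α → ℝ) (X : Finset α) :
    IsCompact (mixtureDefaultProbs d D p X) := by
  have hK : IsCompact (stdSimplex ℝ {c : Finset α → α // Rationalizable D c} ∩
      {ν | ∀ A ∈ D.erase X, ∑ c with c.val A = d, ν c = p A}) := by
    refine (isCompact_stdSimplex ℝ _).inter_right ?_
    simp only [Set.ofPred_forall]
    exact isClosed_biInter fun A _ => isClosed_eq (by fun_prop) continuous_const
  convert hK.image (f := fun ν => ∑ c with c.val X = d, ν c) (by fun_prop) using 1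
  ext y
  simp [mixtureDefaultProbs, stdSimplex, and_assoc, eq_comm]

end Mixtures

end

theorem pdRUM_isGreatest_general {α : Type*} [Fintype α] [DecidableEq α]
    (d : α) (D : Finset (Finset α)) (hd : ∀ A ∈ D, d ∈ A)
    (hX : Finset.univ ∈ D)
    (p : Finset α → ℝ)
    (hcons : ConsistentRUMDefault d (D.erase Finset.univ) p) :
    IsGreatest
      {y : ℝ | ∃ ν : {c : Finset α → α // Rationalizable D c} → ℝ,
        (∀ c, 0 ≤ ν c) ∧ (∑ c, ν c = 1) ∧
        (∀ A ∈ D.erase Finset.univ,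
          (∑ c ∈ Finset.univ.filter
            (fun c : {c : Finset α → α // Rationalizable D c} => c.val A = d), ν c) = p A) ∧
        y = ∑ c ∈ Finset.univ.filter
          (fun c : {c : Finset α → α // Rationalizable D c} => c.val Finset.univ = d), ν c}
      (pdRUM d D p) := by
  have hfeasible : {x : ℝ | x ∈ Set.Icc (0 : ℝ) 1 ∧
      ConsistentRUMDefault d D (Function.update p Finset.univ x)} =
      mixtureDefaultProbs d D p Finset.univ := by
    ext x
    rw [Set.mem_ofPred_eq, mem_mixtureDefaultProbs_iff hd hX]
    exact ⟨And.right, fun h => ⟨by simpa using h.mem_Icc hX, h⟩⟩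
  obtain ⟨x, hx⟩ := hcons.exists_update
  rw [pdRUM, hfeasible]
  exact (isCompact_mixtureDefaultProbs p _).isGreatest_sSup
    ⟨x, (mem_mixtureDefaultProbs_iff hd hX p x).2 hx⟩

/-- if the restriction of `p_d` to `D \ {X}` is consistent with RUM, then
`p_d^RUM(X)` equals the maximum, over all probability distributions `ν` on the set of
rationalizable deterministic choice functions on `D` that reproduce `p_d` on `D \ {X}`,
of the `ν`-probability of `{c : c X = d}`; in particular the maximum is attained. -/
theorem pdRUM_isGreatest {α : Type*} [Fintype α] [DecidableEq α]
    (d : α) (D : Finset (Finset α)) (hd : ∀ A ∈ D, d ∈ A)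
    (hX : Finset.univ ∈ D)
    (p : Finset α → ℝ) (hp : ∀ A ∈ D, p A ∈ Set.Icc (0 : ℝ) 1)
    (hcons : ConsistentRUMDefault d (D.erase Finset.univ) p) :
    IsGreatest
      {y : ℝ | ∃ ν : {c : Finset α → α // Rationalizable D c} → ℝ,
        (∀ c, 0 ≤ ν c) ∧ (∑ c, ν c = 1) ∧
        (∀ A ∈ D.erase Finset.univ,
          (∑ c ∈ Finset.univ.filter
            (fun c : {c : Finset α → α // Rationalizable D c} => c.val A = d), ν c) = p A) ∧
        y = ∑ c ∈ Finset.univ.filter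
          (fun c : {c : Finset α → α // Rationalizable D c} => c.val Finset.univ = d), ν c}
      (pdRUM d D p) :=
  pdRUM_isGreatest_general d D hd hX p hcons
end

section
/- Let X be a finite set with default d ∈ X, and let A be a subset of X with d ∈ A, A ≠ {d} (A contains at least one non-default element), and A a proper subset of X. Let D = {A, X} and let α, β ∈ [0,1]. The default-choice data set p_d with p_d(A) = α and p_d(X) = β is consistent with the random utility model if and only if β ≤ α. -/
open scoped Classical

/-! The inequality is regularity: if `d` beats everything in `X`, it beats everything in `A ⊆ X`.
Conversely, with `c ∈ X \ A` and `b ∈ A \ {d}`, mix three rankings: `d` on top (weight `p_d(X)`),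
`c` above `d` above the rest (weight `p_d(A) - p_d(X)`), and `b` on top (weight `1 - p_d(A)`). -/

open Function

section IsUniqueMax

variable {α : Type*} {u v : α → ℝ} {A B : Finset α} {x : α}

theorem IsUniqueMax.mono (h : IsUniqueMax u B x) (hx : x ∈ A) (hAB : A ⊆ B) :
    IsUniqueMax u A x :=
  ⟨hx, fun y hy hyx => h.2 y (hAB hy) hyx⟩

theorem IsUniqueMax.congr (h : IsUniqueMax u A x) (huv : ∀ y ∈ A, u y = v y) :
    IsUniqueMax v A x :=
  ⟨h.1, fun y hy hyx => huv y hy ▸ huv x h.1 ▸ h.2 y hy hyx⟩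

theorem not_isUniqueMax_of_lt {y : α} (hy : y ∈ A) (hyx : y ≠ x) (hlt : u x < u y) :
    ¬ IsUniqueMax u A x :=
  fun h => (h.2 y hy hyx).asymm hlt

variable [DecidableEq α]

theorem isUniqueMax_update {a : ℝ} (hu : ∀ y, y ≠ x → u y < a) (hx : x ∈ A) :
    IsUniqueMax (update u x a) A x :=
  ⟨hx, fun y _ hyx => by simpa [update_of_ne hyx] using hu y hyx⟩

end IsUniqueMax

section Update

variable {α : Type*} [DecidableEq α] {u : α → ℝ} {x : α} {a b : ℝ}

theorem injective_update_of_lt (hu : Injective u) (hlt : ∀ y, u y < a) :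
    Injective (update u x a) := by
  intro y z h
  by_cases hy : y = x <;> by_cases hz : z = x
  · rw [hy, hz]
  · rw [hy, update_self, update_of_ne hz] at h
    exact absurd h (hlt z).ne'
  · rw [hz, update_self, update_of_ne hy] at h
    exact absurd h (hlt y).ne
  · exact hu (by simpa [update_of_ne hy, update_of_ne hz] using h)

theorem update_lt (hlt : ∀ y, u y < b) (hab : a < b) (y : α) : update u x a y < b := by
  by_cases hy : y = x
  · simpa [hy] using hab
  · simpa [update_of_ne hy] using hlt y

end Update

theorem exists_injective_neg (α : Type*) [Finite α] :
    ∃ f : α → ℝ, Injective f ∧ ∀ x, f x < 0 := by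
  obtain ⟨n, ⟨e⟩⟩ := Finite.exists_equiv_fin α
  refine ⟨fun x => -((e x : ℕ) + 1 : ℝ), fun x y h => e.injective (Fin.ext ?_), fun x => ?_⟩
  · simpa using h
  · dsimp only; linarith [(e x : ℕ).cast_nonneg (α := ℝ)]

theorem ConsistentRUMDefault.le_of_subset {α : Type*} {d : α} {D : Finset (Finset α)}
    {p : Finset α → ℝ} (h : ConsistentRUMDefault d D p) {A B : Finset α} (hA : A ∈ D)
    (hB : B ∈ D) (hdA : d ∈ A) (hAB : A ⊆ B) : p B ≤ p A := by
  obtain ⟨n, u, ρ, -, hρ, -, hp⟩ := h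
  rw [hp A hA, hp B hB]
  refine Finset.sum_le_sum_of_subset_of_nonneg (fun i hi => ?_) fun i _ _ => hρ i
  simp only [Finset.mem_filter, Finset.mem_univ, true_and] at hi ⊢
  exact hi.mono hdA hAB

theorem consistentRUMDefault_pair {α : Type*} [Fintype α] [DecidableEq α] {d b c : α}
    {A B : Finset α} (hdA : d ∈ A) (hbA : b ∈ A) (hbd : b ≠ d) (hcB : c ∈ B) (hcA : c ∉ A)
    (hAB : A ⊆ B) {p : Finset α → ℝ} (hpB : 0 ≤ p B) (hle : p B ≤ p A) (hpA : p A ≤ 1) :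
    ConsistentRUMDefault d {A, B} p := by
  have hcd : c ≠ d := fun h => hcA (h ▸ hdA)
  obtain ⟨f, hf, hf0⟩ := exists_injective_neg α
  set u₁ := update f d 0
  have hu₁ : ∀ y, u₁ y < 1 := update_lt (fun y => (hf0 y).trans one_pos) one_pos
  have hmax₁ : ∀ {C : Finset α}, d ∈ C → IsUniqueMax u₁ C d :=
    isUniqueMax_update fun y _ => hf0 y
  have hmax₂ : IsUniqueMax (update u₁ c 1) A d :=
    (hmax₁ hdA).congr fun y hy => (update_of_ne (ne_of_mem_of_not_mem hy hcA) _ _).symm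
  have hnot₂ : ¬ IsUniqueMax (update u₁ c 1) B d :=
    not_isUniqueMax_of_lt hcB hcd (by simpa [update_of_ne hcd.symm] using hu₁ d)
  have hnot₃ : ∀ {C : Finset α}, b ∈ C → ¬ IsUniqueMax (update u₁ b 1) C d :=
    fun hbC => not_isUniqueMax_of_lt hbC hbd (by simpa [update_of_ne hbd.symm] using hu₁ d)
  refine ⟨3, ![u₁, update u₁ c 1, update u₁ b 1], ![p B, p A - p B, 1 - p A], ?_, ?_, ?_, ?_⟩
  · have hinj₁ : Injective u₁ := injective_update_of_lt hf hf0
    intro i; fin_cases i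
    exacts [hinj₁, injective_update_of_lt hinj₁ hu₁, injective_update_of_lt hinj₁ hu₁]
  · intro i; fin_cases i <;>
      simp only [Fin.zero_eta, Fin.mk_one, Fin.reduceFinMk, Fin.isValue, Matrix.cons_val_zero,
        Matrix.cons_val_one, Matrix.cons_val, sub_nonneg] <;> linarith
  · simp [Fin.sum_univ_three]
  · intro C hC
    rw [Finset.sum_filter, Fin.sum_univ_three]
    rcases Finset.mem_insert.mp hC with rfl | hC
    · simp [hmax₁ hdA, hmax₂, hnot₃ hbA]
    · rw [Finset.mem_singleton.mp hC]
      simp [hmax₁ (hAB hdA), hnot₂, hnot₃ (hAB hbA)]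

/-- with `D = {A, X}` where `d ∈ A`, `A` contains a non-default element and
`A` is a proper subset of the grand set `X = Finset.univ`, the default-choice data set with
`p_d(A) = pA` and `p_d(X) = pX` (both in `[0,1]`) is consistent with RUM iff `pX ≤ pA`. -/
theorem two_set_rum_iff {α : Type*} [Fintype α] [DecidableEq α]
    (d : α) (A : Finset α) (hdA : d ∈ A) (hA : ∃ x ∈ A, x ≠ d)
    (hAX : A ⊂ Finset.univ)
    (pA pX : ℝ) (hpA : pA ∈ Set.Icc (0 : ℝ) 1) (hpX : pX ∈ Set.Icc (0 : ℝ) 1)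
    (p : Finset α → ℝ) (hp1 : p A = pA) (hp2 : p Finset.univ = pX) :
    ConsistentRUMDefault d {A, Finset.univ} p ↔ pX ≤ pA := by
  subst hp1 hp2
  refine ⟨fun h => h.le_of_subset (by simp) (by simp) hdA (Finset.subset_univ A), fun hle => ?_⟩
  obtain ⟨b, hbA, hbd⟩ := hA
  obtain ⟨c, -, hcA⟩ := Finset.exists_of_ssubset hAX
  exact consistentRUMDefault_pair hdA hbA hbd (Finset.mem_univ c) hcA (Finset.subset_univ A)
    hpX.1 hle hpA.2
end

section
/- Let Ω be a symmetric positive definite m × m real matrix with induced inner product ⟨x, y⟩_Ω = xᵀΩy, let C̃ ⊆ ℝ^m be a closed convex cone, let π ∈ ℝ^m, let η̃ be the point of C̃ minimizing ⟨π − η, π − η⟩_Ω over η ∈ C̃, and let a ∈ ℝ^m. Then η̃ minimizes ⟨π − η, π − η⟩_Ω over the convex cone generated by C̃ ∪ {a} if and only if ⟨π − η̃, a⟩_Ω ≤ 0. -/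
open Matrix

/-- The inner product on `ℝ^m` induced by the positive definite matrix `Ω`. -/
def innOmega {m : ℕ} (Ω : Matrix (Fin m) (Fin m) ℝ) (x y : Fin m → ℝ) : ℝ :=
  x ⬝ᵥ Ω.mulVec y

/-- The convex cone generated by a set `S ⊆ ℝ^m`: all finite nonnegative linear
combinations of elements of `S`. -/
def genCone {m : ℕ} (S : Set (Fin m → ℝ)) : Set (Fin m → ℝ) :=
  {x | ∃ (n : ℕ) (v : Fin n → Fin m → ℝ) (t : Fin n → ℝ),
    (∀ i, v i ∈ S) ∧ (∀ i, 0 ≤ t i) ∧ x = ∑ i, t i • v i}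

/-!
Perturbing the projection `η` of `π` along segments in `C` and along its own ray gives
`⟨π - η, c⟩_Ω ≤ 0` on `C` and `⟨π - η, η⟩_Ω = 0`. If also `⟨π - η, a⟩_Ω ≤ 0`, this functional is
nonpositive on the cone generated by `C ∪ {a}`, and for `x` in that cone
`‖π - x‖² = ‖π - η‖² - 2⟨π - η, x - η⟩ + ‖x - η‖² ≥ ‖π - η‖²`. Conversely, minimality along
`η + t • a` for small `t > 0` forces `⟨π - η, a⟩_Ω ≤ 0`.
-/

section innOmega

variable {m : ℕ} {Ω : Matrix (Fin m) (Fin m) ℝ}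

lemma innOmega_comm (hsym : Ω.IsSymm) (x y : Fin m → ℝ) :
    innOmega Ω x y = innOmega Ω y x := by
  rw [innOmega, innOmega, dotProduct_mulVec, ← mulVec_transpose, hsym, dotProduct_comm]

lemma innOmega_self_nonneg (hpsd : Ω.PosSemidef) (x : Fin m → ℝ) : 0 ≤ innOmega Ω x x :=
  hpsd.dotProduct_mulVec_nonneg x

lemma innOmega_sub_right (x y z : Fin m → ℝ) :
    innOmega Ω x (y - z) = innOmega Ω x y - innOmega Ω x z := by
  simp only [innOmega, mulVec_sub, dotProduct_sub]

lemma innOmega_neg_right (x y : Fin m → ℝ) : innOmega Ω x (-y) = -innOmega Ω x y := by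
  simp only [innOmega, mulVec_neg, dotProduct_neg]

lemma innOmega_sum_smul_right {n : ℕ} (x : Fin m → ℝ) (t : Fin n → ℝ) (v : Fin n → Fin m → ℝ) :
    innOmega Ω x (∑ i, t i • v i) = ∑ i, t i * innOmega Ω x (v i) := by
  simp only [innOmega, mulVec_sum, dotProduct_sum, mulVec_smul, dotProduct_smul, smul_eq_mul]

lemma innOmega_sub_smul_self (hsym : Ω.IsSymm) (x u : Fin m → ℝ) (t : ℝ) :
    innOmega Ω (x - t • u) (x - t • u)
      = innOmega Ω x x - 2 * t * innOmega Ω x u + t ^ 2 * innOmega Ω u u := by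
  have hux := innOmega_comm hsym u x
  simp only [innOmega, mulVec_sub, mulVec_smul, sub_dotProduct, dotProduct_sub,
    smul_dotProduct, dotProduct_smul, smul_eq_mul] at hux ⊢
  rw [hux]
  ring

end innOmega

lemma nonpos_of_forall_two_mul_le_mul {A D : ℝ} (h : ∀ t : ℝ, 0 < t → t ≤ 1 → 2 * A ≤ t * D) :
    A ≤ 0 := by
  have hlim : Filter.Tendsto (fun t : ℝ => t * D) (nhdsWithin 0 (Set.Ioi 0)) (nhds 0) := by
    simpa using ((continuous_mul_const D).tendsto 0).mono_left nhdsWithin_le_nhds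
  have h2A : 2 * A ≤ 0 := ge_of_tendsto hlim <| by
    filter_upwards [Ioc_mem_nhdsGT one_pos] with t ht using h t ht.1 ht.2
  linarith

section Projection

variable {m : ℕ} {Ω : Matrix (Fin m) (Fin m) ℝ} {π η : Fin m → ℝ}

lemma innOmega_nonpos_of_forall_le_add_smul (hsym : Ω.IsSymm) {d : Fin m → ℝ}
    (hmin : ∀ t : ℝ, 0 < t → t ≤ 1 →
      innOmega Ω (π - η) (π - η) ≤ innOmega Ω (π - (η + t • d)) (π - (η + t • d))) :
    innOmega Ω (π - η) d ≤ 0 := by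
  refine nonpos_of_forall_two_mul_le_mul (D := innOmega Ω d d) fun t ht0 ht1 => ?_
  have hle := hmin t ht0 ht1
  rw [sub_add_eq_sub_sub, innOmega_sub_smul_self hsym] at hle
  nlinarith

lemma innOmega_sub_self_le_of_innOmega_nonpos (hsym : Ω.IsSymm) (hpsd : Ω.PosSemidef)
    {x : Fin m → ℝ} (hx : innOmega Ω (π - η) (x - η) ≤ 0) :
    innOmega Ω (π - η) (π - η) ≤ innOmega Ω (π - x) (π - x) := by
  have hexp := innOmega_sub_smul_self hsym (π - η) (x - η) 1
  rw [one_smul, sub_sub_sub_cancel_right] at hexp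
  rw [hexp]
  nlinarith [innOmega_self_nonneg hpsd (x - η)]

lemma innOmega_nonpos_and_eq_zero_of_isProj_cone (hsym : Ω.IsSymm) {C : Set (Fin m → ℝ)}
    (hconv : Convex ℝ C) (hcone : ∀ x ∈ C, ∀ t : ℝ, 0 ≤ t → t • x ∈ C) (hη : η ∈ C)
    (hmin : ∀ c ∈ C, innOmega Ω (π - η) (π - η) ≤ innOmega Ω (π - c) (π - c)) :
    (∀ c ∈ C, innOmega Ω (π - η) c ≤ 0) ∧ innOmega Ω (π - η) η = 0 := by
  have hscale : ∀ s : ℝ, 0 ≤ 1 + s → innOmega Ω (π - η) (s • η) ≤ 0 := fun s hs =>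
    innOmega_nonpos_of_forall_le_add_smul hsym fun t _ _ => by
      have hmem := hcone η hη (1 + t * s) (by nlinarith)
      rw [add_smul, one_smul, ← smul_smul] at hmem
      exact hmin _ hmem
  have hη0 : innOmega Ω (π - η) η = 0 := by
    have hplus := hscale 1 (by norm_num)
    have hminus := hscale (-1) (by norm_num)
    rw [one_smul] at hplus
    rw [neg_one_smul, innOmega_neg_right] at hminus
    linarith
  refine ⟨fun c hc => ?_, hη0⟩
  have hseg : innOmega Ω (π - η) (c - η) ≤ 0 :=
    innOmega_nonpos_of_forall_le_add_smul hsym fun t ht0 ht1 => by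
      refine hmin _ ?_
      have hmem := hconv hη hc (sub_nonneg.2 ht1) ht0.le (sub_add_cancel 1 t)
      convert hmem using 1
      simp only [smul_sub, sub_smul, one_smul]
      abel
  rwa [innOmega_sub_right, hη0, sub_zero] at hseg

end Projection

section genCone

variable {m : ℕ} {S : Set (Fin m → ℝ)}

lemma add_smul_mem_genCone {x y : Fin m → ℝ} (hx : x ∈ S) (hy : y ∈ S) {t : ℝ} (ht : 0 ≤ t) :
    x + t • y ∈ genCone S := by
  refine ⟨2, ![x, y], ![1, t], fun i => ?_, fun i => ?_, by simp [Fin.sum_univ_two]⟩ <;>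
    fin_cases i <;> simp [hx, hy, ht]

lemma innOmega_nonpos_of_mem_genCone {Ω : Matrix (Fin m) (Fin m) ℝ} {r x : Fin m → ℝ}
    (hS : ∀ s ∈ S, innOmega Ω r s ≤ 0) (hx : x ∈ genCone S) : innOmega Ω r x ≤ 0 := by
  obtain ⟨n, v, t, hv, ht, rfl⟩ := hx
  rw [innOmega_sum_smul_right]
  exact Finset.sum_nonpos fun i _ => mul_nonpos_of_nonneg_of_nonpos (ht i) (hS _ (hv i))

end genCone

theorem pricing_criterion_general {m : ℕ}
    (Ω : Matrix (Fin m) (Fin m) ℝ) (hsym : Ω.IsSymm) (hpos : Ω.PosDef)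
    (C : Set (Fin m → ℝ)) (hconv : Convex ℝ C)
    (hcone : ∀ x ∈ C, ∀ t : ℝ, 0 ≤ t → t • x ∈ C)
    (π η : Fin m → ℝ) (hη : η ∈ C)
    (hmin : ∀ c ∈ C, innOmega Ω (π - η) (π - η) ≤ innOmega Ω (π - c) (π - c))
    (a : Fin m → ℝ) :
    (∀ x ∈ genCone (C ∪ {a}), innOmega Ω (π - η) (π - η) ≤ innOmega Ω (π - x) (π - x)) ↔
      innOmega Ω (π - η) a ≤ 0 := by
  obtain ⟨hC, hη0⟩ := innOmega_nonpos_and_eq_zero_of_isProj_cone hsym hconv hcone hη hmin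
  constructor
  · intro hgen
    exact innOmega_nonpos_of_forall_le_add_smul hsym fun t ht0 _ =>
      hgen _ (add_smul_mem_genCone (Or.inl hη) (Or.inr rfl) ht0.le)
  · intro ha x hx
    have hCa : ∀ s ∈ C ∪ {a}, innOmega Ω (π - η) s ≤ 0 := by
      rintro s (hs | rfl)
      exacts [hC s hs, ha]
    have hx0 := innOmega_nonpos_of_mem_genCone hCa hx
    refine innOmega_sub_self_le_of_innOmega_nonpos hsym hpos.posSemidef ?_
    rwa [innOmega_sub_right, hη0, sub_zero]

/-- let `η` be the `Ω`-projection of `π` onto the closed convex cone `C`.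
Then `η` minimizes the `Ω`-distance squared from `π` over the convex cone generated by
`C ∪ {a}` iff `⟨π − η, a⟩_Ω ≤ 0`. -/
theorem pricing_criterion {m : ℕ}
    (Ω : Matrix (Fin m) (Fin m) ℝ) (hsym : Ω.IsSymm) (hpos : Ω.PosDef)
    (C : Set (Fin m → ℝ)) (hclosed : IsClosed C) (hconv : Convex ℝ C)
    (hcone : ∀ x ∈ C, ∀ t : ℝ, 0 ≤ t → t • x ∈ C)
    (π η : Fin m → ℝ) (hη : η ∈ C)
    (hmin : ∀ c ∈ C, innOmega Ω (π - η) (π - η) ≤ innOmega Ω (π - c) (π - c))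
    (a : Fin m → ℝ) :
    (∀ x ∈ genCone (C ∪ {a}), innOmega Ω (π - η) (π - η) ≤ innOmega Ω (π - x) (π - x)) ↔
      innOmega Ω (π - η) a ≤ 0 :=
  pricing_criterion_general Ω hsym hpos C hconv hcone π η hη hmin a
end
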